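/- arXiv:1302.3115 — 4 statements merged into one kernel-verified Lean document; each statement's English description precedes it below -/
import Mathlib

section
/- For every integer n ≥ 2, the n-th derivative of a holomorphic function u satisfying the Riccati equation u' = r(u−a)(u−b) is given by u^(n)(z) = r^n · Σ_{k=0}^{n−1} ⟨n,k⟩ (u−a)^{k+1} (u−b)^{n−k}, where ⟨n,k⟩ are the Eulerian numbers. -/
open scoped BigOperators
open MeasureTheory

/-- Eulerian numbers `⟨n,k⟩`: number of permutations of `{1,…,n}` with `k` ascents,
via the recurrence `⟨n+1,k⟩ = (k+1)⟨n,k⟩ + (n−k+1)⟨n,k−1⟩`. -/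
def eulerian : ℕ → ℕ → ℕ
  | 0, 0 => 1
  | 0, _ + 1 => 0
  | n + 1, 0 => eulerian n 0
  | n + 1, k + 1 => (k + 2) * eulerian n (k + 1) + (n - k) * eulerian n k

/-!
Along a solution of `u' = r (u - a) (u - b)`, a monomial `x^i y^j` in `x = u - a`, `y = u - b`
differentiates to `r (i x^i y^(j+1) + j x^(i+1) y^j)`, since `x' = y' = r x y`. Applied to
`F_n = ∑ₖ ⟨n,k⟩ x^(k+1) y^(n-k)` (`eulerianForm n x y`), the coefficient of `x^(k+2) y^(n-k)`
in the result is `(k+2)⟨n,k+1⟩ + (n-k)⟨n,k⟩ = ⟨n+1,k+1⟩`, so `F_n' = r F_(n+1)`, and induction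
from `u' = r F_1` gives `u^(n) = r^n F_n`.
-/

open Finset

theorem eulerian_eq_zero_of_lt : ∀ {n k : ℕ}, n < k → eulerian n k = 0
  | 0, _ + 1, _ => rfl
  | n + 1, k + 1, h => by
    simp [eulerian, eulerian_eq_zero_of_lt (by omega : n < k + 1),
      eulerian_eq_zero_of_lt (by omega : n < k)]

theorem eulerian_succ_self (n : ℕ) : eulerian (n + 1) (n + 1) = 0 := by
  simp [eulerian, eulerian_eq_zero_of_lt n.lt_succ_self]

def eulerianForm {R : Type*} [CommSemiring R] (n : ℕ) (x y : R) : R :=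
  ∑ k ∈ range n, (eulerian n k : R) * x ^ (k + 1) * y ^ (n - k)

theorem eulerianForm_one {R : Type*} [CommSemiring R] (x y : R) :
    eulerianForm 1 x y = x * y := by
  simp [eulerianForm, eulerian]

theorem sum_eulerian_mul_riccati_monomial {R : Type*} [CommSemiring R] (n : ℕ) (x y : R) :
    ∑ k ∈ range (n + 1), (eulerian (n + 1) k : R) *
        (((k + 1 : ℕ) : R) * x ^ (k + 1) * y ^ (n + 1 - k + 1)
          + ((n + 1 - k : ℕ) : R) * x ^ (k + 2) * y ^ (n + 1 - k))
      = eulerianForm (n + 2) x y := by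
  set A : ℕ → R := fun k =>
    (eulerian (n + 1) k : R) * (((k + 1 : ℕ) : R) * x ^ (k + 1) * y ^ (n + 1 - k + 1))
  set B : ℕ → R := fun k =>
    (eulerian (n + 1) k : R) * (((n + 1 - k : ℕ) : R) * x ^ (k + 2) * y ^ (n + 1 - k))
  -- the `k = n + 1` term of `A` vanishes, which lets us shift the index of its sum by one
  have hA : ∑ k ∈ range (n + 1), A k = ∑ k ∈ range (n + 1), A (k + 1) + A 0 := by
    rw [← sum_range_succ', sum_range_succ _ (n + 1)]
    simp [A, eulerian_succ_self]
  have hAB : ∀ k ∈ range (n + 1),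
      A (k + 1) + B k = eulerian (n + 2) (k + 1) * x ^ (k + 1 + 1) * y ^ (n + 2 - (k + 1)) := by
    intro k hk
    have h₁ : n + 1 - (k + 1) + 1 = n + 1 - k := by simp only [mem_range] at hk; omega
    have h₂ : n + 2 - (k + 1) = n + 1 - k := by omega
    simp only [A, B, h₁, h₂, eulerian]
    push_cast
    ring
  calc _ = ∑ k ∈ range (n + 1), A k + ∑ k ∈ range (n + 1), B k := by
        simp only [A, B, mul_add, sum_add_distrib]
    _ = ∑ k ∈ range (n + 1), (A (k + 1) + B k) + A 0 := by
        rw [hA, sum_add_distrib]; ring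
    _ = eulerianForm (n + 2) x y := by
        rw [sum_congr rfl hAB, eulerianForm, sum_range_succ' _ (n + 1)]
        congr 1
        simp only [A, eulerian, Nat.sub_zero]
        push_cast
        ring

section Riccati

variable {𝕜 : Type*} [NontriviallyNormedField 𝕜] {u : 𝕜 → 𝕜} {r a b z : 𝕜}

theorem HasDerivAt.riccati_monomial (hu : HasDerivAt u (r * (u z - a) * (u z - b)) z) (i j : ℕ) :
    HasDerivAt (fun w => (u w - a) ^ i * (u w - b) ^ j)
      (r * ((i : 𝕜) * (u z - a) ^ i * (u z - b) ^ (j + 1)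
        + (j : 𝕜) * (u z - a) ^ (i + 1) * (u z - b) ^ j)) z := by
  refine (((hu.sub_const a).fun_pow i).fun_mul ((hu.sub_const b).fun_pow j)).congr_deriv ?_
  rcases i with _ | i <;> rcases j with _ | j <;> push_cast [Nat.add_sub_cancel] <;> ring

theorem HasDerivAt.riccati_eulerianForm (hu : HasDerivAt u (r * (u z - a) * (u z - b)) z)
    (n : ℕ) :
    HasDerivAt (fun w => eulerianForm (n + 1) (u w - a) (u w - b))
      (r * eulerianForm (n + 2) (u z - a) (u z - b)) z := by
  rw [← sum_eulerian_mul_riccati_monomial, mul_sum]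
  refine HasDerivAt.fun_sum fun k _ => ?_
  have hk := (hu.riccati_monomial (k + 1) (n + 1 - k)).const_mul (eulerian (n + 1) k : 𝕜)
  simp only [← mul_assoc] at hk
  exact hk.congr_deriv (by ring)

theorem iteratedDerivWithin_eq_pow_mul_eulerianForm {s : Set 𝕜} (hs : UniqueDiffOn 𝕜 s)
    (hu : ∀ z ∈ s, HasDerivAt u (r * (u z - a) * (u z - b)) z) {n : ℕ} (hn : n ≠ 0) (hz : z ∈ s) :
    iteratedDerivWithin n u s z = r ^ n * eulerianForm n (u z - a) (u z - b) := by
  obtain ⟨n, rfl⟩ := Nat.exists_eq_add_one_of_ne_zero hn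
  clear hn
  induction n generalizing z with
  | zero =>
    rw [iteratedDerivWithin_one, (hu z hz).hasDerivWithinAt.derivWithin (hs z hz), eulerianForm_one]
    ring
  | succ n ih =>
    rw [iteratedDerivWithin_succ, derivWithin_congr (fun w hw => ih hw) (ih hz),
      (((hu z hz).riccati_eulerianForm n).const_mul _).hasDerivWithinAt.derivWithin
        (hs z hz), ← mul_assoc, ← pow_succ]

end Riccati

theorem riccati_iterated_deriv_general
    (D : Set ℂ) (hD : IsOpen D) (r a b : ℂ)
    (u : ℂ → ℂ) (hu : ∀ z ∈ D, HasDerivAt u (r * (u z - a) * (u z - b)) z)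
    (n : ℕ) (hn : 2 ≤ n) (z : ℂ) (hz : z ∈ D) :
    iteratedDerivWithin n u D z =
      r ^ n * ∑ k ∈ Finset.range n,
        (eulerian n k : ℂ) * (u z - a) ^ (k + 1) * (u z - b) ^ (n - k) :=
  iteratedDerivWithin_eq_pow_mul_eulerianForm hD.uniqueDiffOn hu (by omega) hz

theorem riccati_iterated_deriv
    (D : Set ℂ) (hD : IsOpen D) (r a b : ℂ) (hr : r ≠ 0) (hab : a ≠ b)
    (u : ℂ → ℂ) (hu : ∀ z ∈ D, HasDerivAt u (r * (u z - a) * (u z - b)) z)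
    (n : ℕ) (hn : 2 ≤ n) (z : ℂ) (hz : z ∈ D) :
    iteratedDerivWithin n u D z =
      r ^ n * ∑ k ∈ Finset.range n,
        (eulerian n k : ℂ) * (u z - a) ^ (k + 1) * (u z - b) ^ (n - k) :=
  riccati_iterated_deriv_general D hD r a b u hu n hn z hz
end

section
/- If u satisfies u' = r(u−a)(u−b) and v satisfies v' = r·v·(u − (a+b)/2), then for every n ≥ 0 the n-th derivative of v equals v^(n)(z) = v(z) · (r^n / 2^n) · Σ_{k=1}^{n+1} M_{n+1,k} (u−a)^{n+1−k} (u−b)^{k−1}, where M_{n,k} are the MacMahon numbers. -/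
/-!
Put `A = u - a` and `B = u - b`. Then `A' = B' = r A B` and `v' = (r / 2) (A + B) v`. With
`P n = ∑_{p + q = n} M (n + 1) (q + 1) A ^ p B ^ q`, the derivative of `v · P n` is
`(r / 2) v ((A + B) P n + 2 A B (∂_A + ∂_B) P n)`, and the MacMahon recurrence says precisely
that the bracket is `P (n + 1)`. Since `A - B` is constant, `P n` is a polynomial in `u` alone,
and `∂_A + ∂_B` becomes the ordinary derivative in `u`.
-/

open scoped BigOperators
open MeasureTheory

/-- MacMahon numbers `M n k`: `M n 1 = 1`, `M n k = 0` outside `1 ≤ k ≤ n`, and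
`M n k = (2k−1) M (n−1) k + (2n−2k+1) M (n−1) (k−1)`. -/
def macmahon : ℕ → ℕ → ℕ
  | 0, _ => 0
  | 1, 1 => 1
  | 1, _ => 0
  | n + 2, 0 => 0
  | n + 2, k + 1 =>
      (2 * k + 1) * macmahon (n + 1) (k + 1) +
        (2 * (n + 2) - 2 * (k + 1) + 1) * macmahon (n + 1) k

open Finset Polynomial

theorem macmahon_zero_right (n : ℕ) : macmahon n 0 = 0 := by
  rcases n with _ | _ | _ <;> rfl

theorem macmahon_eq_zero_of_lt {n k : ℕ} (h : n < k) : macmahon n k = 0 := by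
  induction n generalizing k with
  | zero => rfl
  | succ n ih =>
    obtain ⟨k, rfl⟩ : ∃ k', k = k' + 2 := ⟨k - 2, by omega⟩
    rcases n with _ | n
    · rfl
    · simp only [macmahon, ih (show n + 1 < k + 2 by omega), ih (show n + 1 < k + 1 by omega),
        mul_zero, add_zero]

theorem macmahon_succ_succ {n p q : ℕ} (h : p + q = n + 1) :
    macmahon (n + 2) (q + 1) =
      (2 * q + 1) * macmahon (n + 1) (q + 1) + (2 * p + 1) * macmahon (n + 1) q := by
  rw [macmahon, show 2 * (n + 2) - 2 * (q + 1) + 1 = 2 * p + 1 by omega]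

section Poly

variable {R : Type*} [CommRing R]

noncomputable def macmahonPoly (a b : R) (n : ℕ) : R[X] :=
  ∑ x ∈ antidiagonal n, (macmahon (n + 1) (x.2 + 1) : R[X]) * ((X - C a) ^ x.1 * (X - C b) ^ x.2)

theorem eval_macmahonPoly (a b z : R) (n : ℕ) :
    (macmahonPoly a b n).eval z =
      ∑ k ∈ Icc 1 (n + 1), (macmahon (n + 1) k : R) * (z - a) ^ (n + 1 - k) * (z - b) ^ (k - 1) := by
  rw [macmahonPoly, eval_finsetSum, ← Nat.sum_antidiagonal_swap,
    Nat.sum_antidiagonal_eq_sum_range_succ_mk, ← Ico_add_one_right_eq_Icc, sum_Ico_eq_sum_range]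
  refine sum_congr (by simp) fun q _ => ?_
  rw [show n + 1 - (1 + q) = n - q by omega, add_comm 1 q, Nat.add_sub_cancel]
  simp only [Prod.swap, eval_mul, eval_pow, eval_sub, eval_X, eval_C, eval_natCast]
  ring

theorem mul_derivative_X_sub_C_pow (c : R) (n : ℕ) :
    (X - C c) * derivative ((X - C c) ^ n) = (n : R[X]) * (X - C c) ^ n := by
  rcases n with _ | n
  · simp
  · rw [derivative_X_sub_C_pow, Nat.add_sub_cancel, ← C_eq_natCast]
    ring

theorem add_mul_X_sub_C_pow_mul_add_derivative (a b : R) (p q : ℕ) :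
    ((X - C a) + (X - C b)) * ((X - C a) ^ p * (X - C b) ^ q) +
        2 * ((X - C a) * (X - C b)) * derivative ((X - C a) ^ p * (X - C b) ^ q) =
      (2 * (q : R[X]) + 1) * ((X - C a) ^ (p + 1) * (X - C b) ^ q) +
        (2 * (p : R[X]) + 1) * ((X - C a) ^ p * (X - C b) ^ (q + 1)) := by
  rw [derivative_mul]
  linear_combination (2 * (X - C b) ^ (q + 1)) * mul_derivative_X_sub_C_pow a p +
    (2 * (X - C a) ^ (p + 1)) * mul_derivative_X_sub_C_pow b q

theorem macmahonPoly_succ (a b : R) (n : ℕ) :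
    macmahonPoly a b (n + 1) =
      ((X - C a) + (X - C b)) * macmahonPoly a b n +
        2 * ((X - C a) * (X - C b)) * derivative (macmahonPoly a b n) := by
  set M : ℕ → ℕ → R[X] := fun n k => (macmahon n k : R[X])
  set e : ℕ → ℕ → R[X] := fun p q => (X - C a) ^ p * (X - C b) ^ q
  have hrhs : ((X - C a) + (X - C b)) * macmahonPoly a b n +
        2 * ((X - C a) * (X - C b)) * derivative (macmahonPoly a b n) =
      ∑ x ∈ antidiagonal n, M (n + 1) (x.2 + 1) *
        ((2 * (x.2 : R[X]) + 1) * e (x.1 + 1) x.2 + (2 * (x.1 : R[X]) + 1) * e x.1 (x.2 + 1)) := by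
    rw [macmahonPoly, derivative_sum, mul_sum, mul_sum, ← sum_add_distrib]
    refine sum_congr rfl fun x _ => ?_
    rw [derivative_natCast_mul, ← add_mul_X_sub_C_pow_mul_add_derivative]
    ring
  have hlhs : macmahonPoly a b (n + 1) =
      ∑ x ∈ antidiagonal (n + 1), (2 * (x.2 : R[X]) + 1) * M (n + 1) (x.2 + 1) * e x.1 x.2 +
        ∑ x ∈ antidiagonal (n + 1), (2 * (x.1 : R[X]) + 1) * M (n + 1) x.2 * e x.1 x.2 := by
    rw [macmahonPoly, ← sum_add_distrib]
    refine sum_congr rfl fun x hx => ?_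
    rw [macmahon_succ_succ (mem_antidiagonal.mp hx)]
    push_cast
    ring
  rw [hlhs, hrhs, Nat.sum_antidiagonal_succ, Nat.sum_antidiagonal_succ']
  simp only [M, macmahon_eq_zero_of_lt (Nat.lt_succ_self (n + 1)), macmahon_zero_right,
    Nat.cast_zero, mul_zero, zero_mul, zero_add, ← sum_add_distrib]
  exact sum_congr rfl fun x _ => by ring

end Poly

theorem iteratedDerivWithin_eqOn_of_hasDerivAt {𝕜 F : Type*} [NontriviallyNormedField 𝕜]
    [NormedAddCommGroup F] [NormedSpace 𝕜 F] {D : Set 𝕜} (hD : IsOpen D) {v : 𝕜 → F}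
    {g : ℕ → 𝕜 → F} (h0 : Set.EqOn (g 0) v D)
    (hg : ∀ n, ∀ z ∈ D, HasDerivAt (g n) (g (n + 1) z) z) (n : ℕ) :
    Set.EqOn (iteratedDerivWithin n v D) (g n) D := by
  induction n with
  | zero => exact fun z hz => (h0 hz).symm
  | succ n ih =>
    intro z hz
    rw [iteratedDerivWithin_succ, derivWithin_congr ih (ih hz)]
    exact ((hg n z hz).hasDerivWithinAt).derivWithin (hD.uniqueDiffWithinAt hz)

theorem hasDerivAt_mul_eval_macmahonPoly {𝕜 : Type*} [NontriviallyNormedField 𝕜] [CharZero 𝕜]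
    {r a b z : 𝕜} {u v : 𝕜 → 𝕜} (hu : HasDerivAt u (r * (u z - a) * (u z - b)) z)
    (hv : HasDerivAt v (r * v z * (u z - (a + b) / 2)) z) (n : ℕ) :
    HasDerivAt (fun x => v x * (macmahonPoly a b n).eval (u x))
      (r / 2 * (v z * (macmahonPoly a b (n + 1)).eval (u z))) z := by
  have hP : HasDerivAt (fun x => (macmahonPoly a b n).eval (u x))
      ((macmahonPoly a b n).derivative.eval (u z) * (r * (u z - a) * (u z - b))) z :=
    ((macmahonPoly a b n).hasDerivAt (u z)).comp z hu
  refine (hv.mul hP).congr_deriv ?_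
  simp only [macmahonPoly_succ, eval_add, eval_mul, eval_sub, eval_X, eval_C, eval_ofNat]
  field_simp
  ring

theorem riccati_v_iterated_deriv_general
    (D : Set ℂ) (hD : IsOpen D) (r a b : ℂ)
    (u v : ℂ → ℂ)
    (hu : ∀ z ∈ D, HasDerivAt u (r * (u z - a) * (u z - b)) z)
    (hv : ∀ z ∈ D, HasDerivAt v (r * v z * (u z - (a + b) / 2)) z)
    (n : ℕ) (z : ℂ) (hz : z ∈ D) :
    iteratedDerivWithin n v D z =
      v z * (r ^ n / 2 ^ n) * ∑ k ∈ Finset.Icc 1 (n + 1),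
        (macmahon (n + 1) k : ℂ) * (u z - a) ^ (n + 1 - k) * (u z - b) ^ (k - 1) := by
  have h0 : Set.EqOn (fun x => (r / 2) ^ 0 * (v x * (macmahonPoly a b 0).eval (u x))) v D :=
    fun x _ => by simp [macmahonPoly, macmahon]
  have hstep (m : ℕ) (x : ℂ) (hx : x ∈ D) :
      HasDerivAt (fun y => (r / 2) ^ m * (v y * (macmahonPoly a b m).eval (u y)))
        ((r / 2) ^ (m + 1) * (v x * (macmahonPoly a b (m + 1)).eval (u x))) x :=
    ((hasDerivAt_mul_eval_macmahonPoly (hu x hx) (hv x hx) m).const_mul _).congr_deriv (by ring)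
  rw [iteratedDerivWithin_eqOn_of_hasDerivAt hD h0 hstep n hz]
  dsimp only
  rw [eval_macmahonPoly, div_pow]
  ring

theorem riccati_v_iterated_deriv
    (D : Set ℂ) (hD : IsOpen D) (r a b : ℂ) (hr : r ≠ 0) (hab : a ≠ b)
    (u v : ℂ → ℂ)
    (hu : ∀ z ∈ D, HasDerivAt u (r * (u z - a) * (u z - b)) z)
    (hv : ∀ z ∈ D, HasDerivAt v (r * v z * (u z - (a + b) / 2)) z)
    (n : ℕ) (z : ℂ) (hz : z ∈ D) :
    iteratedDerivWithin n v D z =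
      v z * (r ^ n / 2 ^ n) * ∑ k ∈ Finset.Icc 1 (n + 1),
        (macmahon (n + 1) k : ℂ) * (u z - a) ^ (n + 1 - k) * (u z - b) ^ (k - 1) :=
  riccati_v_iterated_deriv_general D hD r a b u v hu hv n z hz
end

section
/- If a holomorphic function f satisfies f' = f·(f−1) on a domain, then for every n ≥ 1, f^(n)(z) = (f(z) − 1) · Σ_{k=0}^{n−1} C(n,k) f^(k)(z). -/
/-! Write `S n = ∑_{k<n} C(n,k) f⁽ᵏ⁾` and induct on `f⁽ⁿ⁾ = (f - 1) S n`. Differentiating,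
`f⁽ⁿ⁺¹⁾ = f (f - 1) S n + (f - 1) S n' = (f - 1) (f⁽ⁿ⁾ + S n + S n')` because `f S n = f⁽ⁿ⁾ + S n`,
and Pascal's rule gives `S (n + 1) = S n + f⁽ⁿ⁾ + S n'`. Over `ℂ` the equation makes `f`
holomorphic, hence smooth, on the open set `D`, where derivatives within `D` are ordinary ones. -/

open Finset
open scoped ContDiff

theorem sum_range_succ_choose_mul {R : Type*} [CommSemiring R] (a : ℕ → R) (n : ℕ) :
    ∑ k ∈ range (n + 1), ((n + 1).choose k : R) * a k =
      ∑ k ∈ range n, (n.choose k : R) * a k + a n +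
        ∑ k ∈ range n, (n.choose k : R) * a (k + 1) := by
  have pascal : ∀ k, ((n + 1).choose (k + 1) : R) * a (k + 1) =
      n.choose k * a (k + 1) + n.choose (k + 1) * a (k + 1) := fun k => by
    rw [Nat.choose_succ_succ, Nat.cast_add, add_mul]
  have shift := (sum_range_succ' (fun k => (n.choose k : R) * a k) n).symm.trans
    (sum_range_succ (fun k => (n.choose k : R) * a k) n)
  simp only [Nat.choose_zero_right, Nat.choose_self, Nat.cast_one, one_mul] at shift
  rw [sum_range_succ', sum_congr rfl fun k _ => pascal k, sum_add_distrib,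
    Nat.choose_zero_right, Nat.cast_one, one_mul, add_assoc, shift]
  ring

theorem hasDerivAt_iteratedDerivWithin_of_isOpen {𝕜 F : Type*} [NontriviallyNormedField 𝕜]
    [NormedAddCommGroup F] [NormedSpace 𝕜 F] {f : 𝕜 → F} {s : Set 𝕜} {m : ℕ} {x : 𝕜}
    (hs : IsOpen s) (hf : ContDiffOn 𝕜 (m + 1) f s) (hx : x ∈ s) :
    HasDerivAt (iteratedDerivWithin m f s) (iteratedDerivWithin (m + 1) f s x) x := by
  have hdiff := hf.differentiableOn_iteratedDerivWithin (by exact_mod_cast m.lt_succ_self)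
    hs.uniqueDiffOn x hx
  rw [iteratedDerivWithin_succ, derivWithin_of_isOpen hs hx]
  exact (hdiff.differentiableAt (hs.mem_nhds hx)).hasDerivAt

theorem iteratedDerivWithin_succ_eq_of_hasDerivAt_mul_sub_one {𝕜 : Type*}
    [NontriviallyNormedField 𝕜] {f : 𝕜 → 𝕜} {s : Set 𝕜} (hs : IsOpen s)
    (hf : ∀ z ∈ s, HasDerivAt f (f z * (f z - 1)) z) (hsmooth : ContDiffOn 𝕜 ∞ f s) (n : ℕ) :
    ∀ z ∈ s, iteratedDerivWithin (n + 1) f s z =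
      (f z - 1) * ∑ k ∈ range (n + 1), ((n + 1).choose k : 𝕜) * iteratedDerivWithin k f s z := by
  have hderiv (m : ℕ) {z : 𝕜} (hz : z ∈ s) :
      HasDerivAt (iteratedDerivWithin m f s) (iteratedDerivWithin (m + 1) f s z) z :=
    hasDerivAt_iteratedDerivWithin_of_isOpen hs (hsmooth.of_le (by exact_mod_cast le_top)) hz
  induction n with
  | zero =>
    intro z hz
    simpa [mul_comm] using (hderiv 0 hz).unique (hf z hz)
  | succ n ih =>
    intro z hz
    set S : 𝕜 → 𝕜 := fun x => ∑ k ∈ range (n + 1),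
      ((n + 1).choose k : 𝕜) * iteratedDerivWithin k f s x
    set S' := ∑ k ∈ range (n + 1), ((n + 1).choose k : 𝕜) * iteratedDerivWithin (k + 1) f s z
    have hS : HasDerivAt S S' z := HasDerivAt.fun_sum fun k _ => (hderiv k hz).const_mul _
    have hprod : HasDerivAt (iteratedDerivWithin (n + 1) f s)
        (f z * (f z - 1) * S z + (f z - 1) * S') z :=
      (((hf z hz).sub_const 1).mul hS).congr_of_eventuallyEq
        (Filter.eventually_of_mem (hs.mem_nhds hz) ih)
    rw [(hderiv (n + 1) hz).unique hprod, sum_range_succ_choose_mul, ih z hz]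
    ring

theorem logistic_ode_iterated_deriv
    (D : Set ℂ) (hD : IsOpen D) (f : ℂ → ℂ)
    (hf : ∀ z ∈ D, HasDerivAt f (f z * (f z - 1)) z)
    (n : ℕ) (hn : 1 ≤ n) (z : ℂ) (hz : z ∈ D) :
    iteratedDerivWithin n f D z =
      (f z - 1) * ∑ k ∈ Finset.range n, (n.choose k : ℂ) * iteratedDerivWithin k f D z := by
  have hsmooth : ContDiffOn ℂ ∞ f D :=
    DifferentiableOn.contDiffOn (fun w hw => (hf w hw).differentiableAt.differentiableWithinAt) hD
  obtain ⟨m, rfl⟩ : ∃ m, n = m + 1 := Nat.exists_eq_add_of_le' hn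
  exact iteratedDerivWithin_succ_eq_of_hasDerivAt_mul_sub_one hD hf hsmooth m z hz
end

section
/- For every n ≥ 1, the integral over [a,b] of the derivative polynomial P_n(u; a, b) = Σ_{k=0}^{n−2} ⟨n−1,k⟩ (u−a)^{k+1}(u−b)^{n−1−k} (for n ≥ 2; P_1(u) = u−a) equals −(b−a)^{n+1} B_n, where B_n is the n-th Bernoulli number. -/
/-!
Termwise integration with the beta integral
`∫_a^b (u-a)^p (u-b)^q du = (-1)^q p! q! (b-a)^(p+q+1) / (p+q+1)!` reduces the theorem to
`∑_k ⟨m,k⟩ (-1)^(m-k) (k+1)! (m-k)! = -(m+2)! B_{m+1}`, and the Eulerian recurrence reduces this to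
`∑_k ⟨m,k⟩ (-1)^(m-k) k! (m-k)! = (m+1)! B_m`. The left side is the linear coefficient of
`W_m(X) = ∑_k ⟨m,k⟩ (X+k)(X+k-1)⋯(X+k-m)`. By Worpitzky's identity
`m! x^m = ∑_k ⟨m,k⟩ (x+k)⋯(x+k-m+1)`, `W_m` has forward difference `(m+1)! x^m` and vanishes at
`0`, so it is `m!` times the Faulhaber polynomial `B_{m+1}(X) - B_{m+1}`, whose linear coefficient
is `(m+1) B_m`.
-/

open scoped BigOperators
open MeasureTheory

/-- Derivative polynomial `P_n(u;a,b) = Σ_{k=0}^{n-2} ⟨n-1,k⟩ (u-a)^(k+1) (u-b)^(n-1-k)`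
for `n ≥ 2`, with `P_1(u) = u - a`. -/
noncomputable def P (n : ℕ) (a b u : ℝ) : ℝ :=
  if n = 1 then u - a
  else ∑ k ∈ Finset.range (n - 1), (eulerian (n - 1) k : ℝ) * (u - a) ^ (k + 1) * (u - b) ^ (n - 1 - k)

open Finset
open scoped Nat

theorem eulerian_eq_zero_of_le {n k : ℕ} (hnk : n ≤ k) (hk : k ≠ 0) : eulerian n k = 0 := by
  induction n generalizing k with
  | zero => obtain ⟨j, rfl⟩ := Nat.exists_eq_succ_of_ne_zero hk; rfl
  | succ n ih =>
    obtain ⟨j, rfl⟩ := Nat.exists_eq_succ_of_ne_zero hk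
    rw [eulerian, ih (by omega) j.succ_ne_zero, Nat.sub_eq_zero_of_le (by omega)]
    ring

theorem sum_eulerian_succ_mul {R : Type*} [CommSemiring R] (n : ℕ) (f : ℕ → R) :
    ∑ k ∈ range (n + 2), (eulerian (n + 1) k : R) * f k =
      ∑ k ∈ range (n + 1), (eulerian n k : R) * ((k + 1) * f k + (n - k : ℕ) * f (k + 1)) := by
  have hlast : eulerian n (n + 1) = 0 := eulerian_eq_zero_of_le n.le_succ n.succ_ne_zero
  calc ∑ k ∈ range (n + 2), (eulerian (n + 1) k : R) * f k
      = ∑ k ∈ range (n + 1), ((eulerian n (k + 1) : R) * ((k + 1 + 1 : ℕ) * f (k + 1))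
          + (eulerian n k : R) * ((n - k : ℕ) * f (k + 1)))
        + eulerian n 0 * ((0 + 1 : ℕ) * f 0) := by
        rw [sum_range_succ']
        congr 1
        · refine sum_congr rfl fun k _ => ?_
          rw [eulerian]; push_cast; ring
        · rw [eulerian]; push_cast; ring
    _ = ∑ k ∈ range (n + 2), (eulerian n k : R) * ((k + 1 : ℕ) * f k)
          + ∑ k ∈ range (n + 1), (eulerian n k : R) * ((n - k : ℕ) * f (k + 1)) := by
        rw [sum_range_succ' (fun k => (eulerian n k : R) * ((k + 1 : ℕ) * f k)), sum_add_distrib]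
        ring
    _ = _ := by
        rw [sum_range_succ, hlast, Nat.cast_zero, zero_mul, add_zero, ← sum_add_distrib]
        refine sum_congr rfl fun k _ => ?_
        push_cast
        ring

section Worpitzky

open Polynomial

variable {R : Type*} [CommRing R]

theorem descPochhammer_succ_eval_add_one (n : ℕ) (y : R) :
    (descPochhammer R (n + 1)).eval (y + 1) = (y + 1) * (descPochhammer R n).eval y := by
  simp [descPochhammer_succ_left]

theorem descPochhammer_succ_eval_add_one_sub (n : ℕ) (y : R) :
    (descPochhammer R (n + 1)).eval (y + 1) - (descPochhammer R (n + 1)).eval y =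
      (n + 1) * (descPochhammer R n).eval y := by
  rw [descPochhammer_succ_eval_add_one, descPochhammer_succ_eval]
  ring

theorem factorial_mul_pow_eq_sum_eulerian (n : ℕ) (x : R) :
    n ! * x ^ n = ∑ k ∈ range (n + 1), (eulerian n k : R) * (descPochhammer R n).eval (x + k) := by
  induction n with
  | zero => simp [eulerian]
  | succ n ih =>
    rw [sum_eulerian_succ_mul]
    have hterm : ∀ k ∈ range (n + 1),
        (eulerian n k : R) * ((k + 1) * (descPochhammer R (n + 1)).eval (x + k)
          + (n - k : ℕ) * (descPochhammer R (n + 1)).eval (x + (k + 1 : ℕ))) =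
        (n + 1) * x * ((eulerian n k : R) * (descPochhammer R n).eval (x + k)) := by
      intro k hk
      rw [Nat.cast_sub (Nat.lt_succ_iff.mp (mem_range.mp hk)), Nat.cast_succ, ← add_assoc,
        descPochhammer_succ_eval_add_one, descPochhammer_succ_eval]
      ring
    rw [sum_congr rfl hterm, ← mul_sum, ← ih, Nat.factorial_succ]
    push_cast
    ring

theorem sum_eulerian_mul_descPochhammer_eval_natCast (m N : ℕ) :
    ∑ k ∈ range (m + 1), (eulerian m k : R) * (descPochhammer R (m + 1)).eval ((N : R) + k) =
      (m + 1)! * ∑ i ∈ range N, (i : R) ^ m := by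
  induction N with
  | zero =>
    simp only [Nat.cast_zero, zero_add, range_zero, sum_empty, mul_zero]
    exact sum_eq_zero fun k hk => by
      rw [descPochhammer_eval_coe_nat_of_lt (mem_range.mp hk), mul_zero]
  | succ N ih =>
    have hstep : ∀ k ∈ range (m + 1),
        (eulerian m k : R) * (descPochhammer R (m + 1)).eval (((N + 1 : ℕ) : R) + k) =
          (eulerian m k : R) * (descPochhammer R (m + 1)).eval ((N : R) + k) +
            (m + 1) * ((eulerian m k : R) * (descPochhammer R m).eval ((N : R) + k)) := by
      intro k _
      rw [show ((N + 1 : ℕ) : R) + k = (N + k) + 1 by push_cast; ring]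
      linear_combination (eulerian m k : R) * descPochhammer_succ_eval_add_one_sub m ((N : R) + k)
    rw [sum_congr rfl hstep, sum_add_distrib, ih, ← mul_sum, ← factorial_mul_pow_eq_sum_eulerian,
      sum_range_succ, Nat.factorial_succ]
    push_cast
    ring

theorem coeff_one_descPochhammer_succ_comp_X_add {n k : ℕ} (hk : k ≤ n) :
    ((descPochhammer R (n + 1)).comp (X + C (k : R))).coeff 1 =
      (-1) ^ (n - k) * k ! * (n - k)! := by
  have hfactor : (descPochhammer R (n + 1)).comp (X + C (k : R)) =
      X * ((descPochhammer R k).comp (X + C (k : R)) *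
        (descPochhammer R (n - k)).comp (X - 1)) := by
    rw [show n + 1 = k + (n - k + 1) by omega, ← descPochhammer_mul, descPochhammer_succ_left]
    simp only [mul_comp, comp_assoc, X_comp, sub_comp, natCast_comp, one_comp, C_eq_natCast,
      add_sub_cancel_right]
    ring
  have heval_neg_one : ∀ j, (descPochhammer R j).eval (-1) = (-1) ^ j * j ! := by
    intro j
    induction j with
    | zero => simp
    | succ j ih => rw [descPochhammer_succ_eval, ih, Nat.factorial_succ]; push_cast; ring
  rw [hfactor, coeff_X_mul, coeff_zero_eq_eval_zero]
  simp only [map_natCast, eval_mul, eval_comp, eval_add, eval_X, eval_natCast, zero_add,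
    descPochhammer_eval_eq_descFactorial, Nat.descFactorial_self, eval_sub, eval_one, zero_sub,
    heval_neg_one]
  ring

end Worpitzky

section Bernoulli

open Polynomial

theorem sum_eulerian_C_mul_descPochhammer_comp (m : ℕ) :
    ∑ k ∈ range (m + 1), C (eulerian m k : ℚ) * (descPochhammer ℚ (m + 1)).comp (X + C (k : ℚ)) =
      C (m ! : ℚ) * (Polynomial.bernoulli (m + 1) - C (_root_.bernoulli (m + 1))) := by
  refine eq_of_infinite_eval_eq _ _ (Set.infinite_of_injective_forall_mem Nat.cast_injective
    fun N : ℕ => ?_)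
  have h := sum_range_pow_eq_bernoulli_sub N m
  have h2 := sum_eulerian_mul_descPochhammer_eval_natCast (R := ℚ) m N
  simp only [Set.mem_ofPred_eq, eval_finsetSum, eval_mul, eval_C, eval_comp, eval_add, eval_X,
    eval_sub]
  rw [h2, ← h, Nat.factorial_succ]
  push_cast
  ring

theorem sum_eulerian_mul_factorial_mul_factorial (m : ℕ) :
    ∑ k ∈ range (m + 1), (eulerian m k : ℚ) * ((-1) ^ (m - k) * k ! * (m - k)!) =
      (m + 1)! * _root_.bernoulli m := by
  have h := congrArg (coeff · 1) (sum_eulerian_C_mul_descPochhammer_comp m)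
  simp only [finsetSum_coeff, coeff_C_mul, coeff_sub, coeff_C, coeff_bernoulli] at h
  rw [sum_congr rfl fun k hk => by
    rw [coeff_one_descPochhammer_succ_comp_X_add (Nat.lt_succ_iff.mp (mem_range.mp hk))]] at h
  rw [h, Nat.factorial_succ]
  simp only [le_add_iff_nonneg_left, zero_le, ↓reduceIte, add_tsub_cancel_right,
    Nat.choose_one_right, Nat.cast_add, Nat.cast_one, one_ne_zero, sub_zero, Nat.cast_mul]
  ring

theorem sum_eulerian_mul_factorial_succ_mul_factorial (m : ℕ) :
    ∑ k ∈ range (m + 1), (eulerian m k : ℚ) * ((-1) ^ (m - k) * (k + 1)! * (m - k)!) =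
      -((m + 2)! * _root_.bernoulli (m + 1)) := by
  rw [← sum_eulerian_mul_factorial_mul_factorial (m + 1), sum_eulerian_succ_mul, ← sum_neg_distrib]
  refine sum_congr rfl fun k hk => ?_
  have hkm : k ≤ m := Nat.lt_succ_iff.mp (mem_range.mp hk)
  rw [show m + 1 - k = m - k + 1 by omega, show m + 1 - (k + 1) = m - k by omega,
    Nat.cast_sub hkm, Nat.factorial_succ (m - k), Nat.factorial_succ k]
  push_cast [Nat.cast_sub hkm]
  ring

end Bernoulli

theorem integral_sub_pow_mul_sub_pow_succ (a b : ℝ) (p q : ℕ) :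
    (p + 1) * ∫ u in a..b, (u - a) ^ p * (u - b) ^ (q + 1) =
      -((q + 1) * ∫ u in a..b, (u - a) ^ (p + 1) * (u - b) ^ q) := by
  have hderiv : ∀ u ∈ Set.uIcc a b, HasDerivAt (fun u => (u - a) ^ (p + 1) * (u - b) ^ (q + 1))
      ((p + 1) * ((u - a) ^ p * (u - b) ^ (q + 1)) + (q + 1) * ((u - a) ^ (p + 1) * (u - b) ^ q))
      u := by
    intro u _
    refine ((((hasDerivAt_id u).sub_const a).fun_pow (p + 1)).fun_mul
      (((hasDerivAt_id u).sub_const b).fun_pow (q + 1))).congr_deriv ?_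
    simp only [id, Nat.add_sub_cancel, Nat.cast_add, Nat.cast_one]
    ring
  have hftc := intervalIntegral.integral_eq_sub_of_hasDerivAt hderiv
    ((by fun_prop : Continuous _).intervalIntegrable _ _)
  rw [intervalIntegral.integral_add ((by fun_prop : Continuous _).intervalIntegrable _ _)
    ((by fun_prop : Continuous _).intervalIntegrable _ _), intervalIntegral.integral_const_mul,
    intervalIntegral.integral_const_mul] at hftc
  simp only [sub_self, zero_pow (Nat.succ_ne_zero _), mul_zero, zero_mul] at hftc
  linear_combination hftc

theorem integral_sub_pow_mul_sub_pow (a b : ℝ) (p q : ℕ) :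
    ∫ u in a..b, (u - a) ^ p * (u - b) ^ q =
      (-1) ^ q * p ! * q ! / (p + q + 1)! * (b - a) ^ (p + q + 1) := by
  induction q generalizing p with
  | zero =>
    simp only [pow_zero, mul_one, intervalIntegral.integral_comp_sub_right fun u => u ^ p,
      sub_self, integral_pow, zero_pow (Nat.succ_ne_zero p), sub_zero, Nat.factorial_succ,
      Nat.factorial_zero, add_zero, Nat.cast_mul, Nat.cast_add, Nat.cast_one]
    field_simp
  | succ q ih =>
    have h := integral_sub_pow_mul_sub_pow_succ a b p q
    rw [ih, show p + 1 + q + 1 = p + (q + 1) + 1 by ring] at h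
    have hp : (p + 1 : ℝ) ≠ 0 := by positivity
    rw [← mul_right_inj' hp, h, Nat.factorial_succ p, Nat.factorial_succ q]
    push_cast
    ring

theorem P_succ_eq_sum (m : ℕ) (a b u : ℝ) :
    P (m + 1) a b u =
      ∑ k ∈ range (m + 1), (eulerian m k : ℝ) * ((u - a) ^ (k + 1) * (u - b) ^ (m - k)) := by
  cases m with
  | zero => simp [P, eulerian]
  | succ m =>
    rw [P, if_neg (by omega), sum_range_succ,
      eulerian_eq_zero_of_le le_rfl m.succ_ne_zero, Nat.cast_zero, zero_mul, add_zero]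
    exact sum_congr rfl fun k _ => by rw [Nat.add_sub_cancel, mul_assoc]

theorem integral_P_succ (m : ℕ) (a b : ℝ) :
    ∫ u in a..b, P (m + 1) a b u = (b - a) ^ (m + 2) / (m + 2)! *
      ∑ k ∈ range (m + 1), (eulerian m k : ℝ) * ((-1) ^ (m - k) * (k + 1)! * (m - k)!) := by
  simp_rw [P_succ_eq_sum]
  rw [intervalIntegral.integral_finsetSum
    fun k _ => (by fun_prop : Continuous _).intervalIntegrable _ _, mul_sum]
  refine sum_congr rfl fun k hk => ?_
  rw [intervalIntegral.integral_const_mul, integral_sub_pow_mul_sub_pow,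
    show k + 1 + (m - k) + 1 = m + 2 by have := mem_range.mp hk; omega]
  ring

theorem integral_P_eq_bernoulli (n : ℕ) (hn : 1 ≤ n) (a b : ℝ) :
    ∫ u in a..b, P n a b u = -(b - a) ^ (n + 1) * (bernoulli n : ℝ) := by
  obtain ⟨m, rfl⟩ := Nat.exists_eq_add_of_le' hn
  have hsum := congrArg (Rat.cast : ℚ → ℝ) (sum_eulerian_mul_factorial_succ_mul_factorial m)
  push_cast at hsum
  rw [integral_P_succ, hsum]
  field_simp
end
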